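/- arXiv:2411.08830 — 3 statements merged into one kernel-verified Lean document; each statement's English description precedes it below -/
import Mathlib

section
/- Let (a, [·,·]_a) and (h, [·,·]_h) be Lie super algebras, Θ : a → Der(h) an even linear map, and Λ : a × a → h an even super skew-symmetric bilinear map such that (1) [Θ(x),Θ(y)] - Θ([x,y]_a) = ad_h(Λ(x,y)) and (2) the cyclic sum over (x,y,z) of (-1)^{|x||z|}(Θ(x)(Λ(y,z)) + Λ(x,[y,z]_a)) vanishes. Then the bracket on g = a ⊕ h given by [x+u, y+v] = [x,y]_a + Θ(x)(v) - (-1)^{|x||y|}Θ(y)(u) + Λ(x,y) + [u,v]_h (for homogeneous x+u, y+v with |x|=|u|, |y|=|v|) defines a Lie super algebra structure on g (the generalized semi-direct product). -/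
/-!
The sign `(-1)^{|y||u|}` in front of `Θ(y)(u)` is produced bilinearly by
`Θ(y)(u) - 2 Θ(y₁)(u₁)`, where `y₁, u₁` are the odd components, so the bracket extends to a
bilinear map on all of `a ⊕ h`. Super skew-symmetry is then a direct computation. The super Jacobiator is trilinear and invariant
under cyclic rotation of its arguments, so it suffices to check it on triples of type `(a, a, a)`,
`(a, a, h)`, `(a, h, h)` and `(h, h, h)`, where it vanishes by, respectively, the cyclic
condition (2) with the Jacobi identity of `a`, condition (1), the derivation property of `Θ`,
and the Jacobi identity of `h`.
-/

/-- The sign `(-1)^{ij}` for `i j : ZMod 2`. -/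
def sgn (F : Type*) [Field F] (i j : ZMod 2) : F := (-1) ^ (i * j).val

section

variable {F : Type*} [Field F]

lemma ZMod.eq_zero_or_eq_one_of_two (i : ZMod 2) : i = 0 ∨ i = 1 := by
  revert i; decide

lemma sgn_comm (i j : ZMod 2) : sgn F i j = sgn F j i := by
  rw [sgn, sgn, mul_comm]

lemma sgn_mul_self (i j : ZMod 2) : sgn F i j * sgn F i j = 1 := by
  rw [sgn, ← mul_pow, neg_mul_neg, one_mul, one_pow]

lemma sgn_add_right (i j k : ZMod 2) : sgn F i (j + k) = sgn F i j * sgn F i k := by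
  rw [sgn, mul_add, ZMod.val_add, ← neg_one_pow_eq_pow_mod_two, pow_add, sgn, sgn]

lemma sgn_add_left (i j k : ZMod 2) : sgn F (i + j) k = sgn F i k * sgn F j k := by
  rw [sgn_comm, sgn_add_right, sgn_comm k, sgn_comm k]

section SuperBilinear

variable {M N P : Type*} [AddCommGroup M] [Module F M] [AddCommGroup N] [Module F N]
  [AddCommGroup P] [Module F P]

def IsGradedBilin (gM : ZMod 2 → Submodule F M) (gN : ZMod 2 → Submodule F N)
    (gP : ZMod 2 → Submodule F P) (f : M →ₗ[F] N →ₗ[F] P) : Prop :=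
  ∀ i j : ZMod 2, ∀ m n, m ∈ gM i → n ∈ gN j → f m n ∈ gP (i + j)

def IsSuperSkew (g : ZMod 2 → Submodule F M) (f : M →ₗ[F] M →ₗ[F] P) : Prop :=
  ∀ i j : ZMod 2, ∀ x y, x ∈ g i → y ∈ g j → f x y = -(sgn F i j) • f y x

def superJacobiator (br : M →ₗ[F] M →ₗ[F] M) (i j k : ZMod 2) (x y z : M) : M :=
  sgn F i k • br x (br y z) + sgn F j i • br y (br z x) + sgn F k j • br z (br x y)

def IsSuperJacobi (g : ZMod 2 → Submodule F M) (br : M →ₗ[F] M →ₗ[F] M) : Prop :=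
  ∀ i j k : ZMod 2, ∀ x y z, x ∈ g i → y ∈ g j → z ∈ g k → superJacobiator br i j k x y z = 0

def IsSuperTwist (gM : ZMod 2 → Submodule F M) (gN : ZMod 2 → Submodule F N)
    (f f' : M →ₗ[F] N →ₗ[F] P) : Prop :=
  ∀ i j : ZMod 2, ∀ m n, m ∈ gM i → n ∈ gN j → f' m n = sgn F i j • f m n

def ActsBySuperDerivations (gM : ZMod 2 → Submodule F M) (gN : ZMod 2 → Submodule F N)
    (br : N →ₗ[F] N →ₗ[F] N) (Θ : M →ₗ[F] N →ₗ[F] N) : Prop :=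
  ∀ i j : ZMod 2, ∀ x u v, x ∈ gM i → u ∈ gN j →
    Θ x (br u v) = br (Θ x u) v + sgn F i j • br u (Θ x v)

section Jacobiator

variable (br : M →ₗ[F] M →ₗ[F] M) (i j k : ZMod 2)

lemma superJacobiator_rotate (x y z : M) :
    superJacobiator br i j k x y z = superJacobiator br j k i y z x := by
  simp only [superJacobiator]; abel

lemma superJacobiator_add_left (x x' y z : M) :
    superJacobiator br i j k (x + x') y z =
      superJacobiator br i j k x y z + superJacobiator br i j k x' y z := by
  simp only [superJacobiator, map_add, LinearMap.add_apply, smul_add]; abel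

lemma superJacobiator_add_mid (x y y' z : M) :
    superJacobiator br i j k x (y + y') z =
      superJacobiator br i j k x y z + superJacobiator br i j k x y' z := by
  simp only [superJacobiator, map_add, LinearMap.add_apply, smul_add]; abel

lemma superJacobiator_add_right (x y z z' : M) :
    superJacobiator br i j k x y (z + z') =
      superJacobiator br i j k x y z + superJacobiator br i j k x y z' := by
  simp only [superJacobiator, map_add, LinearMap.add_apply, smul_add]; abel

end Jacobiator

section Twist

variable {gM : ZMod 2 → Submodule F M} {gN : ZMod 2 → Submodule F N}

lemma DirectSum.IsInternal.isCompl_one_zero (h : DirectSum.IsInternal gM) :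
    IsCompl (gM 1) (gM 0) :=
  h.isCompl one_ne_zero (by ext i; rcases i.eq_zero_or_eq_one_of_two with rfl | rfl <;> simp)

noncomputable def oddProjection (h : DirectSum.IsInternal gM) : M →ₗ[F] M :=
  (gM 1).projection (gM 0) h.isCompl_one_zero

lemma oddProjection_apply_of_mem (h : DirectSum.IsInternal gM) {i : ZMod 2} {m : M}
    (hm : m ∈ gM i) : oddProjection h m = if i = 1 then m else 0 := by
  rcases i.eq_zero_or_eq_one_of_two with rfl | rfl
  · exact Submodule.projection_apply_of_mem_right _ hm
  · exact Submodule.projection_apply_of_mem_left _ hm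

noncomputable def superTwist (hM : DirectSum.IsInternal gM) (hN : DirectSum.IsInternal gN)
    (f : M →ₗ[F] N →ₗ[F] P) : M →ₗ[F] N →ₗ[F] P :=
  f - (2 : F) • (f ∘ₗ oddProjection hM).compl₂ (oddProjection hN)

lemma isSuperTwist_superTwist (hM : DirectSum.IsInternal gM) (hN : DirectSum.IsInternal gN)
    (f : M →ₗ[F] N →ₗ[F] P) : IsSuperTwist gM gN f (superTwist hM hN f) := by
  intro i j m n hm hn
  simp only [superTwist, LinearMap.sub_apply, LinearMap.smul_apply, LinearMap.compl₂_apply,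
    LinearMap.comp_apply, oddProjection_apply_of_mem hM hm, oddProjection_apply_of_mem hN hn]
  rcases i.eq_zero_or_eq_one_of_two with rfl | rfl <;>
    rcases j.eq_zero_or_eq_one_of_two with rfl | rfl <;>
    simp [sgn, ZMod.val_one]
  module

end Twist

end SuperBilinear

section SemidirectProduct

variable {A H : Type*} [AddCommGroup A] [Module F A] [AddCommGroup H] [Module F H]
  {gA : ZMod 2 → Submodule F A} {gH : ZMod 2 → Submodule F H}
  (brA : A →ₗ[F] A →ₗ[F] A) (brH : H →ₗ[F] H →ₗ[F] H) (Θ Θ' : A →ₗ[F] H →ₗ[F] H)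
  (Λ : A →ₗ[F] A →ₗ[F] H)

/-- `Θ'` plays the role of `(y, u) ↦ (-1)^{|y||u|} Θ y u` (see `IsSuperTwist`). -/
def semidirectBracket : (A × H) →ₗ[F] (A × H) →ₗ[F] (A × H) :=
  LinearMap.mk₂ F (fun p q => (brA p.1 q.1, Θ p.1 q.2 - Θ' q.1 p.2 + Λ p.1 q.1 + brH p.2 q.2))
    (fun p p' q => by
      simp only [Prod.fst_add, Prod.snd_add, map_add, LinearMap.add_apply, Prod.mk_add_mk]
      congr 1; abel)
    (fun c p q => by
      simp only [Prod.smul_fst, Prod.smul_snd, map_smul, LinearMap.smul_apply, Prod.smul_mk,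
        smul_add, smul_sub])
    (fun p q q' => by
      simp only [Prod.fst_add, Prod.snd_add, map_add, LinearMap.add_apply, Prod.mk_add_mk]
      congr 1; abel)
    (fun c p q => by
      simp only [Prod.smul_fst, Prod.smul_snd, map_smul, LinearMap.smul_apply, Prod.smul_mk,
        smul_add, smul_sub])

@[simp]
lemma semidirectBracket_apply (x y : A) (u v : H) :
    semidirectBracket brA brH Θ Θ' Λ (x, u) (y, v) =
      (brA x y, Θ x v - Θ' y u + Λ x y + brH u v) :=
  rfl

variable {brA brH Θ Θ' Λ}

local notation "Br" => semidirectBracket brA brH Θ Θ' Λ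

def prodGrading (gA : ZMod 2 → Submodule F A) (gH : ZMod 2 → Submodule F H) :
    ZMod 2 → Submodule F (A × H) :=
  fun i => (gA i).prod (gH i)

lemma isGradedBilin_semidirectBracket (hTw : IsSuperTwist gA gH Θ Θ')
    (hA : IsGradedBilin gA gA gA brA) (hH : IsGradedBilin gH gH gH brH)
    (hΘ : IsGradedBilin gA gH gH Θ) (hΛ : IsGradedBilin gA gA gH Λ) :
    IsGradedBilin (prodGrading gA gH) (prodGrading gA gH) (prodGrading gA gH) Br := by
  rintro i j ⟨x, u⟩ ⟨y, v⟩ ⟨hx, hu⟩ ⟨hy, hv⟩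
  have hΘ' : Θ' y u ∈ gH (i + j) := by
    rw [hTw j i y u hy hu, add_comm]
    exact Submodule.smul_mem _ _ (hΘ j i y u hy hu)
  exact ⟨hA i j x y hx hy, add_mem (add_mem (sub_mem (hΘ i j x v hx hv) hΘ')
    (hΛ i j x y hx hy)) (hH i j u v hu hv)⟩

lemma isSuperSkew_semidirectBracket (hTw : IsSuperTwist gA gH Θ Θ')
    (hA : IsSuperSkew gA brA) (hH : IsSuperSkew gH brH) (hΛ : IsSuperSkew gA Λ) :
    IsSuperSkew (prodGrading gA gH) Br := by
  rintro i j ⟨x, u⟩ ⟨y, v⟩ ⟨hx, hu⟩ ⟨hy, hv⟩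
  simp only [semidirectBracket_apply, Prod.smul_mk, Prod.mk.injEq]
  rw [hTw j i y u hy hu, hTw i j x v hx hv, sgn_comm j i]
  refine ⟨hA i j x y hx hy, ?_⟩
  linear_combination (norm := module) hΛ i j x y hx hy + hH i j u v hu hv
    - sgn_mul_self (F := F) i j • Θ x v

section Jacobi

variable {i j k : ZMod 2}

lemma superJacobiator_semidirectBracket_inl_inl_inl (hA : IsSuperJacobi gA brA)
    (hcond2 : ∀ i j k : ZMod 2, ∀ x y z : A, x ∈ gA i → y ∈ gA j → z ∈ gA k →
      sgn F i k • (Θ x (Λ y z) + Λ x (brA y z))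
        + sgn F j i • (Θ y (Λ z x) + Λ y (brA z x))
        + sgn F k j • (Θ z (Λ x y) + Λ z (brA x y)) = 0)
    {x y z : A} (hx : x ∈ gA i) (hy : y ∈ gA j) (hz : z ∈ gA k) :
    superJacobiator Br i j k (x, 0) (y, 0) (z, 0) = 0 := by
  simp only [superJacobiator, semidirectBracket_apply, map_zero, LinearMap.zero_apply, sub_zero,
    add_zero, zero_add, Prod.smul_mk, Prod.mk_add_mk, Prod.mk_eq_zero]
  refine ⟨hA i j k x y z hx hy hz, ?_⟩
  simpa only [smul_add, add_assoc, add_left_comm] using hcond2 i j k x y z hx hy hz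

lemma superJacobiator_semidirectBracket_inl_inl_inr (hTw : IsSuperTwist gA gH Θ Θ')
    (hA : IsGradedBilin gA gA gA brA) (hΛ : IsGradedBilin gA gA gH Λ) (hH : IsSuperSkew gH brH)
    (hcond1 : ∀ i j : ZMod 2, ∀ x y : A, ∀ u : H, x ∈ gA i → y ∈ gA j →
      Θ x (Θ y u) - sgn F i j • Θ y (Θ x u) - Θ (brA x y) u = brH (Λ x y) u)
    {x y : A} {w : H} (hx : x ∈ gA i) (hy : y ∈ gA j) (hw : w ∈ gH k) :
    superJacobiator Br i j k (x, 0) (y, 0) (0, w) = 0 := by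
  simp only [superJacobiator, semidirectBracket_apply, map_zero, LinearMap.zero_apply, sub_zero,
    zero_sub, add_zero, zero_add, Prod.smul_mk, Prod.mk_add_mk, Prod.mk_eq_zero]
  rw [hTw i k x w hx hw, hTw (i + j) k _ w (hA i j x y hx hy) hw,
    hH k (i + j) w _ hw (hΛ i j x y hx hy)]
  refine ⟨by simp, ?_⟩
  simp only [sgn_add_left, sgn_add_right, sgn_comm j i, sgn_comm k i, sgn_comm k j, map_neg,
    map_smul]
  linear_combination (norm := module) sgn F i k • hcond1 i j x y w hx hy
    - sgn_mul_self (F := F) j k • (sgn F i k • (Θ (brA x y) w + brH (Λ x y) w))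

lemma superJacobiator_semidirectBracket_inl_inr_inr (hTw : IsSuperTwist gA gH Θ Θ')
    (hΘ : IsGradedBilin gA gH gH Θ) (hH : IsSuperSkew gH brH)
    (hD : ActsBySuperDerivations gA gH brH Θ)
    {x : A} {v w : H} (hx : x ∈ gA i) (hv : v ∈ gH j) (hw : w ∈ gH k) :
    superJacobiator Br i j k (x, 0) (0, v) (0, w) = 0 := by
  simp only [superJacobiator, semidirectBracket_apply, map_zero, LinearMap.zero_apply, sub_zero,
    zero_sub, add_zero, zero_add, Prod.smul_mk, Prod.mk_add_mk, Prod.mk_eq_zero]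
  rw [hTw i k x w hx hw, hH k (i + j) w _ hw (hΘ i j x v hx hv)]
  refine ⟨by simp, ?_⟩
  simp only [sgn_add_right, sgn_comm j i, sgn_comm k i, sgn_comm k j, map_neg, map_smul]
  linear_combination (norm := module) sgn F i k • hD i j x v w hx hv
    - sgn_mul_self (F := F) j k • (sgn F i k • brH (Θ x v) w)

lemma superJacobiator_semidirectBracket_inr_inr_inr (hH : IsSuperJacobi gH brH)
    {u v w : H} (hu : u ∈ gH i) (hv : v ∈ gH j) (hw : w ∈ gH k) :
    superJacobiator Br i j k (0, u) (0, v) (0, w) = 0 := by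
  simp only [superJacobiator, semidirectBracket_apply, map_zero, LinearMap.zero_apply, sub_zero,
    add_zero, zero_add, Prod.smul_mk, Prod.mk_add_mk, Prod.mk_eq_zero]
  exact ⟨by simp, hH i j k u v w hu hv hw⟩

end Jacobi

lemma isSuperJacobi_semidirectBracket (hTw : IsSuperTwist gA gH Θ Θ')
    (hAgr : IsGradedBilin gA gA gA brA) (hΘgr : IsGradedBilin gA gH gH Θ)
    (hΛgr : IsGradedBilin gA gA gH Λ) (hHskew : IsSuperSkew gH brH)
    (hAjac : IsSuperJacobi gA brA) (hHjac : IsSuperJacobi gH brH)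
    (hD : ActsBySuperDerivations gA gH brH Θ)
    (hcond1 : ∀ i j : ZMod 2, ∀ x y : A, ∀ u : H, x ∈ gA i → y ∈ gA j →
      Θ x (Θ y u) - sgn F i j • Θ y (Θ x u) - Θ (brA x y) u = brH (Λ x y) u)
    (hcond2 : ∀ i j k : ZMod 2, ∀ x y z : A, x ∈ gA i → y ∈ gA j → z ∈ gA k →
      sgn F i k • (Θ x (Λ y z) + Λ x (brA y z))
        + sgn F j i • (Θ y (Λ z x) + Λ y (brA z x))
        + sgn F k j • (Θ z (Λ x y) + Λ z (brA x y)) = 0) :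
    IsSuperJacobi (prodGrading gA gH) Br := by
  rintro i j k ⟨x, u⟩ ⟨y, v⟩ ⟨z, w⟩ ⟨hx, hu⟩ ⟨hy, hv⟩ ⟨hz, hw⟩
  have split : ∀ (a : A) (h : H), (a, h) = (a, 0) + (0, h) := by simp
  rw [split x u, split y v, split z w]
  simp only [superJacobiator_add_left, superJacobiator_add_mid, superJacobiator_add_right]
  rw [← superJacobiator_rotate _ k i j (z, 0) (x, 0) (0, v),
    superJacobiator_rotate _ i j k (0, u) (y, 0) (z, 0),
    superJacobiator_rotate _ i j k (0, u) (y, 0) (0, w),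
    ← superJacobiator_rotate _ k i j (z, 0) (0, u) (0, v),
    superJacobiator_semidirectBracket_inl_inl_inl hAjac hcond2 hx hy hz,
    superJacobiator_semidirectBracket_inl_inl_inr hTw hAgr hΛgr hHskew hcond1 hx hy hw,
    superJacobiator_semidirectBracket_inl_inl_inr hTw hAgr hΛgr hHskew hcond1 hz hx hv,
    superJacobiator_semidirectBracket_inl_inl_inr hTw hAgr hΛgr hHskew hcond1 hy hz hu,
    superJacobiator_semidirectBracket_inl_inr_inr hTw hΘgr hHskew hD hx hv hw,
    superJacobiator_semidirectBracket_inl_inr_inr hTw hΘgr hHskew hD hy hw hu,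
    superJacobiator_semidirectBracket_inl_inr_inr hTw hΘgr hHskew hD hz hu hv,
    superJacobiator_semidirectBracket_inr_inr_inr hHjac hu hv hw]
  simp only [add_zero]

end SemidirectProduct

end

/-- generalized semi-direct product: given Lie super algebras
`(a, [·,·]_a)` and `(h, [·,·]_h)`, an even map `Θ : a → Der(h)` and an even super
skew-symmetric bilinear map `Λ : a × a → h` satisfying
`[Θ(x),Θ(y)] - Θ([x,y]_a) = ad_h(Λ(x,y))` and the cyclic identity, the bracket
`[x+u, y+v] = [x,y]_a + Θ(x)(v) - (-1)^{|x||y|}Θ(y)(u) + Λ(x,y) + [u,v]_h` on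
`g = a ⊕ h` defines a Lie super algebra structure. -/
theorem generalized_semidirect_product (F A H : Type*) [Field F]
    [AddCommGroup A] [Module F A] [AddCommGroup H] [Module F H]
    (gA : ZMod 2 → Submodule F A) (gH : ZMod 2 → Submodule F H)
    (hgA : DirectSum.IsInternal gA) (hgH : DirectSum.IsInternal gH)
    (brA : A →ₗ[F] A →ₗ[F] A) (brH : H →ₗ[F] H →ₗ[F] H)
    (hbrA_even : ∀ i j : ZMod 2, ∀ x y : A, x ∈ gA i → y ∈ gA j → brA x y ∈ gA (i + j))
    (hbrA_skew : ∀ i j : ZMod 2, ∀ x y : A, x ∈ gA i → y ∈ gA j →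
      brA x y = -(sgn F i j) • brA y x)
    (hbrA_jac : ∀ i j k : ZMod 2, ∀ x y z : A, x ∈ gA i → y ∈ gA j → z ∈ gA k →
      sgn F i k • brA x (brA y z) + sgn F j i • brA y (brA z x)
        + sgn F k j • brA z (brA x y) = 0)
    (hbrH_even : ∀ i j : ZMod 2, ∀ u v : H, u ∈ gH i → v ∈ gH j → brH u v ∈ gH (i + j))
    (hbrH_skew : ∀ i j : ZMod 2, ∀ u v : H, u ∈ gH i → v ∈ gH j →
      brH u v = -(sgn F i j) • brH v u)
    (hbrH_jac : ∀ i j k : ZMod 2, ∀ u v w : H, u ∈ gH i → v ∈ gH j → w ∈ gH k →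
      sgn F i k • brH u (brH v w) + sgn F j i • brH v (brH w u)
        + sgn F k j • brH w (brH u v) = 0)
    (Θ : A →ₗ[F] H →ₗ[F] H)
    (hΘ_even : ∀ i j : ZMod 2, ∀ x : A, ∀ u : H, x ∈ gA i → u ∈ gH j →
      Θ x u ∈ gH (i + j))
    (hΘ_der : ∀ i j : ZMod 2, ∀ x : A, ∀ u v : H, x ∈ gA i → u ∈ gH j →
      Θ x (brH u v) = brH (Θ x u) v + sgn F i j • brH u (Θ x v))
    (Λ : A →ₗ[F] A →ₗ[F] H)
    (hΛ_even : ∀ i j : ZMod 2, ∀ x y : A, x ∈ gA i → y ∈ gA j → Λ x y ∈ gH (i + j))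
    (hΛ_skew : ∀ i j : ZMod 2, ∀ x y : A, x ∈ gA i → y ∈ gA j →
      Λ x y = -(sgn F i j) • Λ y x)
    (hcond1 : ∀ i j : ZMod 2, ∀ x y : A, ∀ u : H, x ∈ gA i → y ∈ gA j →
      Θ x (Θ y u) - sgn F i j • Θ y (Θ x u) - Θ (brA x y) u = brH (Λ x y) u)
    (hcond2 : ∀ i j k : ZMod 2, ∀ x y z : A, x ∈ gA i → y ∈ gA j → z ∈ gA k →
      sgn F i k • (Θ x (Λ y z) + Λ x (brA y z))
        + sgn F j i • (Θ y (Λ z x) + Λ y (brA z x))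
        + sgn F k j • (Θ z (Λ x y) + Λ z (brA x y)) = 0) :
    ∃ Br : (A × H) →ₗ[F] (A × H) →ₗ[F] (A × H),
      (∀ i j : ZMod 2, ∀ x y : A, ∀ u v : H,
        x ∈ gA i → u ∈ gH i → y ∈ gA j → v ∈ gH j →
        Br (x, u) (y, v)
          = (brA x y, Θ x v - sgn F i j • Θ y u + Λ x y + brH u v)) ∧
      (∀ i j : ZMod 2, ∀ p q : A × H,
        p ∈ (gA i).prod (gH i) → q ∈ (gA j).prod (gH j) →
        Br p q ∈ (gA (i + j)).prod (gH (i + j))) ∧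
      (∀ i j : ZMod 2, ∀ p q : A × H,
        p ∈ (gA i).prod (gH i) → q ∈ (gA j).prod (gH j) →
        Br p q = -(sgn F i j) • Br q p) ∧
      (∀ i j k : ZMod 2, ∀ p q r : A × H,
        p ∈ (gA i).prod (gH i) → q ∈ (gA j).prod (gH j) → r ∈ (gA k).prod (gH k) →
        sgn F i k • Br p (Br q r) + sgn F j i • Br q (Br r p)
          + sgn F k j • Br r (Br p q) = 0) := by
  have hTw := isSuperTwist_superTwist hgA hgH Θ
  refine ⟨semidirectBracket brA brH Θ (superTwist hgA hgH Θ) Λ, ?_,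
    isGradedBilin_semidirectBracket hTw hbrA_even hbrH_even hΘ_even hΛ_even,
    isSuperSkew_semidirectBracket hTw hbrA_skew hbrH_skew hΛ_skew,
    isSuperJacobi_semidirectBracket hTw hbrA_even hΘ_even hΛ_even hbrH_skew hbrA_jac hbrH_jac
      hΘ_der hcond1 hcond2⟩
  intro i j x y u v _ hu hy _
  rw [semidirectBracket_apply, hTw j i y u hy hu, sgn_comm]
end

section
/- Let (h, [·,·]_h, B_h, ρ, λ, ω_δ) be a δ-context of generalized double extension of (h, B_h) by (a, [·,·]_a). Then χ_δ and Φ_δ (defined via B_h, λ, ρ as usual) satisfy: χ_δ([x,y]_a, u) - χ_δ(x, ρ(y)(u)) + (-1)^{|x||y|} χ_δ(y, ρ(x)(u)) - ad*_δ(x)(χ_δ(y,u)) + (-1)^{|x||y|} ad*_δ(y)(χ_δ(x,u)) + Φ_δ(λ(x,y), u) = 0 for all homogeneous x, y ∈ a and u ∈ h. -/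
/-- The `ZMod 2`-grading of the dual `V*`:
`(V*)_η = {f : f(V_ζ) = 0 for ζ ≠ η}`. -/
def dualGrade {F V : Type*} [Field F] [AddCommGroup V] [Module F V]
    (gV : ZMod 2 → Submodule F V) (η : ZMod 2) : Submodule F (Module.Dual F V) where
  carrier := {f | ∀ ζ : ZMod 2, ζ ≠ η → ∀ v ∈ gV ζ, f v = 0}
  add_mem' := by
    intro f f' hf hf' ζ hζ v hv
    simp [hf ζ hζ v hv, hf' ζ hζ v hv]
  zero_mem' := by
    intro ζ hζ v hv
    simp
  smul_mem' := by
    intro c f hf ζ hζ v hv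
    simp [hf ζ hζ v hv]

set_option maxHeartbeats 1000000 in
/-- Lemma, identity (1.14): in a δ-context of generalized double
extension, `χ_δ` and `Φ_δ` satisfy
`χ_δ([x,y]_a, u) - χ_δ(x, ρ(y)u) + (-1)^{|x||y|} χ_δ(y, ρ(x)u)
 - ad*_δ(x)(χ_δ(y,u)) + (-1)^{|x||y|} ad*_δ(y)(χ_δ(x,u)) + Φ_δ(λ(x,y), u) = 0`,
stated here by evaluating the functional identity at an arbitrary homogeneous
`P_δ(z)`, `z ∈ a`, using
`χ_δ(x,u)(P_δ y) = -(-1)^{|u||y|} B_h(λ(x,y), u)` and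
`Φ_δ(u,v)(P_δ x) = (-1)^{|x|(|u|+|v|)} B_h(ρ(x)(u), v)`. -/
theorem context_identity_two
    (F A H : Type*) [Field F]
    [AddCommGroup A] [Module F A] [AddCommGroup H] [Module F H]
    [FiniteDimensional F A] [FiniteDimensional F H]
    (gA : ZMod 2 → Submodule F A) (gH : ZMod 2 → Submodule F H)
    (hgA : DirectSum.IsInternal gA) (hgH : DirectSum.IsInternal gH)
    (brA : A →ₗ[F] A →ₗ[F] A) (brH : H →ₗ[F] H →ₗ[F] H)
    -- `(a, [·,·]_a)` is a Lie super algebra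
    (hbrA_even : ∀ i j : ZMod 2, ∀ x y : A, x ∈ gA i → y ∈ gA j → brA x y ∈ gA (i + j))
    (hbrA_skew : ∀ i j : ZMod 2, ∀ x y : A, x ∈ gA i → y ∈ gA j →
      brA x y = -(sgn F i j) • brA y x)
    (hbrA_jac : ∀ i j k : ZMod 2, ∀ x y z : A, x ∈ gA i → y ∈ gA j → z ∈ gA k →
      sgn F i k • brA x (brA y z) + sgn F j i • brA y (brA z x)
        + sgn F k j • brA z (brA x y) = 0)
    -- `(h, [·,·]_h)` is a Lie super algebra
    (hbrH_even : ∀ i j : ZMod 2, ∀ u v : H, u ∈ gH i → v ∈ gH j → brH u v ∈ gH (i + j))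
    (hbrH_skew : ∀ i j : ZMod 2, ∀ u v : H, u ∈ gH i → v ∈ gH j →
      brH u v = -(sgn F i j) • brH v u)
    (hbrH_jac : ∀ i j k : ZMod 2, ∀ u v w : H, u ∈ gH i → v ∈ gH j → w ∈ gH k →
      sgn F i k • brH u (brH v w) + sgn F j i • brH v (brH w u)
        + sgn F k j • brH w (brH u v) = 0)
    -- `B_h` is an invariant metric on `h` of degree `δ`
    (δ : ZMod 2) (Bh : H →ₗ[F] H →ₗ[F] F)
    (hBh_symm : ∀ i j : ZMod 2, ∀ u v : H, u ∈ gH i → v ∈ gH j →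
      Bh u v = sgn F i j * Bh v u)
    (hBh_inv : ∀ u v w : H, Bh (brH u v) w = Bh u (brH v w))
    (hBh_nd : ∀ u : H, (∀ v : H, Bh u v = 0) → u = 0)
    (hBh_deg : ∀ i j : ZMod 2, ∀ u v : H, u ∈ gH i → v ∈ gH j → i + j ≠ δ → Bh u v = 0)
    -- `ρ : a → Der(h) ∩ o(B_h)` even linear
    (rho : A →ₗ[F] H →ₗ[F] H)
    (hrho_even : ∀ i j : ZMod 2, ∀ x : A, ∀ u : H, x ∈ gA i → u ∈ gH j →
      rho x u ∈ gH (i + j))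
    (hrho_der : ∀ i j : ZMod 2, ∀ x : A, ∀ u v : H, x ∈ gA i → u ∈ gH j →
      rho x (brH u v) = brH (rho x u) v + sgn F i j • brH u (rho x v))
    (hrho_skew : ∀ i j : ZMod 2, ∀ x : A, ∀ u v : H, x ∈ gA i → u ∈ gH j →
      Bh (rho x u) v = -(sgn F i j) * Bh u (rho x v))
    -- `λ : a × a → h` even super skew-symmetric
    (lam : A →ₗ[F] A →ₗ[F] H)
    (hlam_even : ∀ i j : ZMod 2, ∀ x y : A, x ∈ gA i → y ∈ gA j → lam x y ∈ gH (i + j))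
    (hlam_skew : ∀ i j : ZMod 2, ∀ x y : A, x ∈ gA i → y ∈ gA j →
      lam x y = -(sgn F i j) • lam y x)
    -- `[ρ(x),ρ(y)] - ρ([x,y]_a) = ad_h(λ(x,y))`
    (hdeh1 : ∀ i j : ZMod 2, ∀ x y : A, ∀ u : H, x ∈ gA i → y ∈ gA j →
      rho x (rho y u) - sgn F i j • rho y (rho x u) - rho (brA x y) u
        = brH (lam x y) u)
    -- `Σ_cyclic (-1)^{|z||x|}(ρ(x)(λ(y,z)) + λ(x,[y,z]_a)) = 0`
    (hdeh2 : ∀ i j k : ZMod 2, ∀ x y z : A, x ∈ gA i → y ∈ gA j → z ∈ gA k →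
      sgn F k i • (rho x (lam y z) + lam x (brA y z))
        + sgn F i j • (rho y (lam z x) + lam y (brA z x))
        + sgn F j k • (rho z (lam x y) + lam z (brA x y)) = 0)
    -- `ω_δ : a × a → P_δ(a)*`, even, super skew-symmetric, with the super cyclic
    -- condition and the cocycle-type identity (`P_δ(a)*_η = (a*)_{η+δ}`)
    (ω : A →ₗ[F] A →ₗ[F] Module.Dual F A)
    (hω_even : ∀ i j : ZMod 2, ∀ x y : A, x ∈ gA i → y ∈ gA j →
      ω x y ∈ dualGrade gA (i + j + δ))
    (hω_skew : ∀ i j : ZMod 2, ∀ x y : A, x ∈ gA i → y ∈ gA j →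
      ω x y = -(sgn F i j) • ω y x)
    (hω_cyc : ∀ i j k : ZMod 2, ∀ x y z : A, x ∈ gA i → y ∈ gA j → z ∈ gA k →
      (ω x y) z = sgn F i (j + k) * (ω y z) x)
    (hω_cocycle : ∀ i j k dw : ZMod 2, ∀ x y z w : A,
      x ∈ gA i → y ∈ gA j → z ∈ gA k → w ∈ gA dw →
      sgn F k i * (-(sgn F (j + k) i) * (ω y z) (brA x w) + (ω x (brA y z)) w
          + (-(sgn F (j + k) dw)) * Bh (lam x w) (lam y z))
        + sgn F i j * (-(sgn F (k + i) j) * (ω z x) (brA y w) + (ω y (brA z x)) w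
          + (-(sgn F (k + i) dw)) * Bh (lam y w) (lam z x))
        + sgn F j k * (-(sgn F (i + j) k) * (ω x y) (brA z w) + (ω z (brA x y)) w
          + (-(sgn F (i + j) dw)) * Bh (lam z w) (lam x y)) = 0)
    (a b du c : ZMod 2) (x y z : A) (u : H)
    (hx : x ∈ gA a) (hy : y ∈ gA b) (hu : u ∈ gH du) (hz : z ∈ gA c) :
    -(sgn F du c) * Bh (lam (brA x y) z) u
      + sgn F (b + du) c * Bh (lam x z) (rho y u)
      + sgn F a b * (-(sgn F (a + du) c) * Bh (lam y z) (rho x u))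
      + sgn F (b + du) a * (-(sgn F du (a + c)) * Bh (lam y (brA x z)) u)
      + sgn F a b * (-(sgn F (a + du) b) * (-(sgn F du (b + c)) * Bh (lam x (brA y z)) u))
      + sgn F c ((a + b) + du) * Bh (rho z (lam x y)) u = 0 := by
  have hxz := hlam_even a c x z hx hz
  have hyz := hlam_even b c y z hy hz
  have E := congrArg (fun w => Bh w u) (hdeh2 a b c x y z hx hy hz)
  simp only [map_add, map_smul, LinearMap.add_apply, LinearMap.smul_apply,
    smul_eq_mul, map_zero, LinearMap.zero_apply, map_neg, LinearMap.neg_apply] at E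
  rw [hlam_skew c a z x hz hx, hbrA_skew c a z x hz hx,
      hlam_skew c (a+b) z (brA x y) hz (hbrA_even a b x y hx hy)] at E
  simp only [map_smul, map_neg, LinearMap.neg_apply, LinearMap.smul_apply,
    smul_eq_mul, neg_smul, map_add, LinearMap.add_apply] at E
  rw [hrho_skew b (a+c) y (lam x z) u hy hxz,
      hrho_skew a (b+c) x (lam y z) u hx hyz] at E
  have h2 : ∀ t : ZMod 2, t = 0 ∨ t = 1 := by decide
  rcases h2 a with rfl | rfl <;> rcases h2 b with rfl | rfl <;> rcases h2 du with rfl | rfl <;>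
    rcases h2 c with rfl | rfl <;>
    norm_num [sgn, show ((0:ZMod 2)).val = 0 from rfl, show ((1:ZMod 2)).val = 1 from rfl,
      show ((2:ZMod 2)).val = 0 from rfl, show ((3:ZMod 2)).val = 1 from rfl] at E ⊢ <;>
    first
      | linear_combination E
      | linear_combination -E
end

section
/- Let (h, [·,·]_h, B_h) be a quadratic Lie super algebra of degree δ, a a Lie super algebra, and ρ : a → Der(h) ∩ o(B_h) an even linear map. Then the bilinear map Φ_δ : h × h → P_δ(a)* defined by Φ_δ(u,v)(P_δ(x)) = (-1)^{|x|(|u|+|v|)} B_h(ρ(x)(u), v) is a 2-cocycle of h with values in the trivial h-module P_δ(a)*, i.e., Σ_cyclic (-1)^{|u||w|} Φ_δ(u, [v,w]_h) = 0 for all homogeneous u, v, w ∈ h. -/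
/-- let `(h, [·,·]_h, B_h)` be a quadratic Lie super algebra of degree
`δ`, `a` a Lie super algebra and `ρ : a → Der(h) ∩ o(B_h)` an even linear map. Then
`Φ_δ(u,v)(P_δ x) = (-1)^{|x|(|u|+|v|)} B_h(ρ(x)(u), v)` is a 2-cocycle of `h` with
values in the trivial `h`-module `P_δ(a)*`:
`Σ_cyclic (-1)^{|u||w|} Φ_δ(u, [v,w]_h) = 0`, stated here by evaluating at an
arbitrary homogeneous `P_δ(z)`, `z ∈ a`. -/
theorem Phi_is_cocycle (F A H : Type*) [Field F]
    [AddCommGroup A] [Module F A] [AddCommGroup H] [Module F H]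
    [FiniteDimensional F A] [FiniteDimensional F H]
    (gA : ZMod 2 → Submodule F A) (gH : ZMod 2 → Submodule F H)
    (hgA : DirectSum.IsInternal gA) (hgH : DirectSum.IsInternal gH)
    (brA : A →ₗ[F] A →ₗ[F] A) (brH : H →ₗ[F] H →ₗ[F] H)
    (hbrA_even : ∀ i j : ZMod 2, ∀ x y : A, x ∈ gA i → y ∈ gA j → brA x y ∈ gA (i + j))
    (hbrA_skew : ∀ i j : ZMod 2, ∀ x y : A, x ∈ gA i → y ∈ gA j →
      brA x y = -(sgn F i j) • brA y x)
    (hbrA_jac : ∀ i j k : ZMod 2, ∀ x y z : A, x ∈ gA i → y ∈ gA j → z ∈ gA k →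
      sgn F i k • brA x (brA y z) + sgn F j i • brA y (brA z x)
        + sgn F k j • brA z (brA x y) = 0)
    (hbrH_even : ∀ i j : ZMod 2, ∀ u v : H, u ∈ gH i → v ∈ gH j → brH u v ∈ gH (i + j))
    (hbrH_skew : ∀ i j : ZMod 2, ∀ u v : H, u ∈ gH i → v ∈ gH j →
      brH u v = -(sgn F i j) • brH v u)
    (hbrH_jac : ∀ i j k : ZMod 2, ∀ u v w : H, u ∈ gH i → v ∈ gH j → w ∈ gH k →
      sgn F i k • brH u (brH v w) + sgn F j i • brH v (brH w u)
        + sgn F k j • brH w (brH u v) = 0)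
    (δ : ZMod 2) (Bh : H →ₗ[F] H →ₗ[F] F)
    (hBh_symm : ∀ i j : ZMod 2, ∀ u v : H, u ∈ gH i → v ∈ gH j →
      Bh u v = sgn F i j * Bh v u)
    (hBh_inv : ∀ u v w : H, Bh (brH u v) w = Bh u (brH v w))
    (hBh_nd : ∀ u : H, (∀ v : H, Bh u v = 0) → u = 0)
    (hBh_deg : ∀ i j : ZMod 2, ∀ u v : H, u ∈ gH i → v ∈ gH j → i + j ≠ δ → Bh u v = 0)
    (rho : A →ₗ[F] H →ₗ[F] H)
    (hrho_even : ∀ i j : ZMod 2, ∀ x : A, ∀ u : H, x ∈ gA i → u ∈ gH j →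
      rho x u ∈ gH (i + j))
    (hrho_der : ∀ i j : ZMod 2, ∀ x : A, ∀ u v : H, x ∈ gA i → u ∈ gH j →
      rho x (brH u v) = brH (rho x u) v + sgn F i j • brH u (rho x v))
    (hrho_skew : ∀ i j : ZMod 2, ∀ x : A, ∀ u v : H, x ∈ gA i → u ∈ gH j →
      Bh (rho x u) v = -(sgn F i j) * Bh u (rho x v))
    (du dv dw c : ZMod 2) (u v w : H) (z : A)
    (hu : u ∈ gH du) (hv : v ∈ gH dv) (hw : w ∈ gH dw) (hz : z ∈ gA c) :
    sgn F du dw * (sgn F c (du + (dv + dw)) * Bh (rho z u) (brH v w))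
      + sgn F dv du * (sgn F c (dv + (dw + du)) * Bh (rho z v) (brH w u))
      + sgn F dw dv * (sgn F c (dw + (du + dv)) * Bh (rho z w) (brH u v)) = 0 := by
  have hρv : rho z v ∈ gH (c + dv) := hrho_even c dv z v hz hv
  have hρw : rho z w ∈ gH (c + dw) := hrho_even c dw z w hz hw
  have huv : brH u v ∈ gH (du + dv) := hbrH_even du dv u v hu hv
  -- E1
  have E1 : Bh (rho z u) (brH v w) = -(sgn F c du) * Bh u (rho z (brH v w)) :=
    hrho_skew c du z u (brH v w) hz hu
  have E1' : Bh u (rho z (brH v w))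
      = Bh u (brH (rho z v) w) + sgn F c dv * Bh u (brH v (rho z w)) := by
    rw [hrho_der c dv z v w hz hv]
    simp [map_add, map_smul, smul_eq_mul]
  have E2 : Bh u (brH (rho z v) w)
      = (-(sgn F du (c + dv))) * ((-(sgn F du dw)) * Bh (rho z v) (brH w u)) := by
    rw [← hBh_inv u (rho z v) w, hbrH_skew du (c + dv) u (rho z v) hu hρv]
    rw [map_smul, LinearMap.smul_apply, smul_eq_mul, hBh_inv,
      hbrH_skew du dw u w hu hw, map_smul, smul_eq_mul]
  have E3 : Bh u (brH v (rho z w))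
      = sgn F (du + dv) (c + dw) * Bh (rho z w) (brH u v) := by
    rw [← hBh_inv u v (rho z w)]
    exact hBh_symm (du + dv) (c + dw) (brH u v) (rho z w) huv hρw
  have L1 : sgn F du dw * (-(sgn F c du)) * ((-(sgn F du (c + dv))) * (-(sgn F du dw)))
      = -(sgn F dv du) := by
    have h2 : ∀ x : ZMod 2, x = 0 ∨ x = 1 := by decide
    rcases h2 du with rfl | rfl <;> rcases h2 dv with rfl | rfl <;> rcases h2 dw with rfl | rfl <;> rcases h2 c with rfl | rfl <;>
      norm_num [sgn, show ZMod.val (1:ZMod 2) = 1 from rfl, show ZMod.val (2:ZMod 2) = 0 from rfl,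
        show ZMod.val (4:ZMod 2) = 0 from rfl, show ZMod.val (0:ZMod 2) = 0 from rfl]
  have L2 : sgn F du dw * (-(sgn F c du)) * (sgn F c dv * sgn F (du + dv) (c + dw))
      = -(sgn F dw dv) := by
    have h2 : ∀ x : ZMod 2, x = 0 ∨ x = 1 := by decide
    rcases h2 du with rfl | rfl <;> rcases h2 dv with rfl | rfl <;> rcases h2 dw with rfl | rfl <;> rcases h2 c with rfl | rfl <;>
      norm_num [sgn, show ZMod.val (1:ZMod 2) = 1 from rfl, show ZMod.val (2:ZMod 2) = 0 from rfl,
        show ZMod.val (4:ZMod 2) = 0 from rfl, show ZMod.val (0:ZMod 2) = 0 from rfl]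
  have key : sgn F du dw * Bh (rho z u) (brH v w)
      + sgn F dv du * Bh (rho z v) (brH w u)
      + sgn F dw dv * Bh (rho z w) (brH u v) = 0 := by
    rw [E1, E1', E2, E3]
    linear_combination Bh (rho z v) (brH w u) * L1 + Bh (rho z w) (brH u v) * L2
  have e2 : dv + (dw + du) = du + (dv + dw) := by ring
  have e3 : dw + (du + dv) = du + (dv + dw) := by ring
  rw [e2, e3]
  linear_combination sgn F c (du + (dv + dw)) * key
end
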